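/- Set β_k := 2/(α_k(1−γ)) for k = 1,2, and let ψ be as in the context. There exist c₆ > 0 and L₀ > 1 such that for every L ≥ L₀ and every Borel measure ν on ℝ^d with ν(Λ_j) ≤ 1 for all j ∈ ℤ^d the following holds: setting Λ̃ := ⋃_{j=(j₁,j₂)∈ℤ^d, 2L^{β₁} < |j₁| ≤ 4L^{β₁} and 2L^{β₂} < |j₂| ≤ 4L^{β₂}} Λ_j and V_{ν,L}(x) := ∫_{{y : |y₁| > L^{β₁} and |y₂| > L^{β₂}}} f(x − y) ν(dy), one has ∫_{Λ₀} V_{ν,L}(x) ψ(x)² dx ≥ c₆ · L^{−2/(1−γ)} · ν(Λ̃). -/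

import Mathlib

/-!
For `y` in a cube of the annulus `Λ̃` one has `L^{β_k} < |y_k| ≤ 5 L^{β_k}`, and `β_k α_k = 2/(1-γ)`,
so the averaged lower bound on `f` gives `∫_{Λ₀} f(x - y) dx ≥ f_u / ((5^{α₁} + 5^{α₂}) L^{2/(1-γ)})`.
Integrating this against `ν` over `Λ̃`, exchanging the two integrals (`ν` is σ-finite, being finite
on every cube), enlarging `Λ̃` to `{|y₁| > L^{β₁}, |y₂| > L^{β₂}}` and using `ψ² ≥ s` on `Λ₀`
gives the claim.
-/

open MeasureTheory ENNReal

noncomputable section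

/-- The half-open unit cube `Λ_j = j + [-1/2, 1/2)^d` centred at the lattice point `j`. -/
def cube (d : ℕ) (j : Fin d → ℤ) : Set (Fin d → ℝ) :=
  {x | ∀ i, (j i : ℝ) - 1/2 ≤ x i ∧ x i < (j i : ℝ) + 1/2}

/-- The unit cube in the product space `ℝ^{d₁} × ℝ^{d₂}` centred at the lattice point `j`. -/
def cubeP (d₁ d₂ : ℕ) (j : (Fin d₁ → ℤ) × (Fin d₂ → ℤ)) :
    Set ((Fin d₁ → ℝ) × (Fin d₂ → ℝ)) :=
  (cube d₁ j.1) ×ˢ (cube d₂ j.2)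

/-- The lattice point `j ∈ ℤ^{d₁} × ℤ^{d₂}` viewed as a vector of `ℝ^{d₁} × ℝ^{d₂}`. -/
def latVecP (d₁ d₂ : ℕ) (j : (Fin d₁ → ℤ) × (Fin d₂ → ℤ)) :
    (Fin d₁ → ℝ) × (Fin d₂ → ℝ) :=
  (fun i => (j.1 i : ℝ), fun i => (j.2 i : ℝ))

open Filter Function

section Cubes

variable {d d₁ d₂ : ℕ}

lemma measurableSet_cube (j : Fin d → ℤ) : MeasurableSet (cube d j) := by
  have : cube d j = Set.univ.pi fun i => Set.Ico ((j i : ℝ) - 1/2) ((j i : ℝ) + 1/2) := by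
    ext x; simp [cube, Set.mem_pi]
  exact this ▸ MeasurableSet.univ_pi fun _ => measurableSet_Ico

lemma measurableSet_cubeP (j : (Fin d₁ → ℤ) × (Fin d₂ → ℤ)) : MeasurableSet (cubeP d₁ d₂ j) :=
  (measurableSet_cube _).prod (measurableSet_cube _)

lemma mem_cube_floor_add_half (x : Fin d → ℝ) : x ∈ cube d fun i => ⌊x i + 1/2⌋ := fun i =>
  ⟨by linarith [Int.floor_le (x i + 1/2)], by linarith [Int.lt_floor_add_one (x i + 1/2)]⟩

lemma iUnion_cubeP : ⋃ j, cubeP d₁ d₂ j = Set.univ :=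
  Set.eq_univ_of_forall fun x => Set.mem_iUnion.2
    ⟨(_, _), mem_cube_floor_add_half x.1, mem_cube_floor_add_half x.2⟩

lemma sigmaFinite_of_measure_cubeP_lt_top {ν : Measure ((Fin d₁ → ℝ) × (Fin d₂ → ℝ))}
    (hν : ∀ j, ν (cubeP d₁ d₂ j) < ∞) : SigmaFinite ν :=
  Measure.sigmaFinite_of_countable (Set.countable_range _) (Set.forall_mem_range.2 hν)
    (by rw [Set.sUnion_range, iUnion_cubeP])

lemma abs_norm_sub_norm_le_of_mem_cube {j : Fin d → ℤ} {y : Fin d → ℝ} (hy : y ∈ cube d j) :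
    |‖y‖ - ‖j‖| ≤ 1/2 := by
  have hj : ‖(fun i => (j i : ℝ))‖ = ‖j‖ := by simp only [Pi.norm_def]; congr 1
  rw [← hj]
  refine (abs_norm_sub_norm_le _ _).trans <|
    (pi_norm_le_iff_of_nonneg (by norm_num : (0 : ℝ) ≤ 1/2)).2 fun i => ?_
  rw [Pi.sub_apply, Real.norm_eq_abs, abs_le]
  constructor <;> linarith [hy i]

lemma norm_bounds_of_mem_cube {a : ℝ} (ha : 1/2 ≤ a) {j : Fin d → ℤ}
    (hj : 2 * a < ‖j‖ ∧ ‖j‖ ≤ 4 * a) {y : Fin d → ℝ} (hy : y ∈ cube d j) :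
    a < ‖y‖ ∧ ‖y‖ ≤ 5 * a := by
  have := abs_le.1 (abs_norm_sub_norm_le_of_mem_cube hy)
  constructor <;> linarith

def annulusIndices (d₁ d₂ : ℕ) (a₁ a₂ : ℝ) : Set ((Fin d₁ → ℤ) × (Fin d₂ → ℤ)) :=
  {j | (2 * a₁ < ‖j.1‖ ∧ ‖j.1‖ ≤ 4 * a₁) ∧ (2 * a₂ < ‖j.2‖ ∧ ‖j.2‖ ≤ 4 * a₂)}

lemma norm_bounds_of_mem_annulus {a₁ a₂ : ℝ} (ha₁ : 1/2 ≤ a₁) (ha₂ : 1/2 ≤ a₂)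
    {y : (Fin d₁ → ℝ) × (Fin d₂ → ℝ)} (hy : y ∈ ⋃ j ∈ annulusIndices d₁ d₂ a₁ a₂, cubeP d₁ d₂ j) :
    (a₁ < ‖y.1‖ ∧ a₂ < ‖y.2‖) ∧ ‖y.1‖ ≤ 5 * a₁ ∧ ‖y.2‖ ≤ 5 * a₂ := by
  obtain ⟨j, ⟨hj₁, hj₂⟩, hy₁, hy₂⟩ := Set.mem_iUnion₂.1 hy
  obtain ⟨hl₁, hu₁⟩ := norm_bounds_of_mem_cube ha₁ hj₁ hy₁
  obtain ⟨hl₂, hu₂⟩ := norm_bounds_of_mem_cube ha₂ hj₂ hy₂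
  exact ⟨⟨hl₁, hl₂⟩, hu₁, hu₂⟩

lemma measurableSet_biUnion_annulus (a₁ a₂ : ℝ) :
    MeasurableSet (⋃ j ∈ annulusIndices d₁ d₂ a₁ a₂, cubeP d₁ d₂ j) :=
  .biUnion (Set.to_countable _) fun j _ => measurableSet_cubeP j

end Cubes

lemma rpow_le_mul_rpow_mul_of_le {x c L β α : ℝ} (hx : 0 ≤ x) (hc : 0 ≤ c) (hL : 0 ≤ L)
    (hα : 0 ≤ α) (h : x ≤ c * L ^ β) : x ^ α ≤ c ^ α * L ^ (β * α) := by
  calc x ^ α ≤ (c * L ^ β) ^ α := Real.rpow_le_rpow hx h hα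
    _ = c ^ α * L ^ (β * α) := by
      rw [Real.mul_rpow hc (Real.rpow_nonneg hL _), Real.rpow_mul hL]

lemma mul_measure_le_lintegral_setLIntegral {α β : Type*} [MeasurableSpace α] [MeasurableSpace β]
    {μ : Measure α} {ν : Measure β} [SFinite μ] [SFinite ν] {g : α → β → ℝ≥0∞}
    (hg : Measurable (uncurry g)) {T : Set β} (hT : MeasurableSet T) {c : ℝ≥0∞}
    (hc : ∀ y ∈ T, c ≤ ∫⁻ x, g x y ∂μ) :
    c * ν T ≤ ∫⁻ x, ∫⁻ y in T, g x y ∂ν ∂μ := by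
  calc c * ν T = ∫⁻ _ in T, c ∂ν := (setLIntegral_const T c).symm
    _ ≤ ∫⁻ y in T, ∫⁻ x, g x y ∂μ ∂ν :=
      lintegral_mono_ae ((ae_restrict_iff' hT).2 (ae_of_all _ hc))
    _ = ∫⁻ x, ∫⁻ y in T, g x y ∂ν ∂μ := (lintegral_lintegral_swap hg.aemeasurable).symm

lemma mul_mul_measure_le_setLIntegral_mul {α β : Type*} [MeasurableSpace α]
    [MeasurableSpace β] {μ : Measure α} {ν : Measure β} [SFinite μ] [SFinite ν]
    {g : α → β → ℝ≥0∞} (hg : Measurable (uncurry g)) {K : Set α} (hK : MeasurableSet K)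
    {T A : Set β} (hT : MeasurableSet T) (hTA : T ⊆ A) {c s : ℝ≥0∞} {w : α → ℝ≥0∞}
    (hc : ∀ y ∈ T, c ≤ ∫⁻ x in K, g x y ∂μ) (hw : ∀ x ∈ K, s ≤ w x) :
    (c * ν T) * s ≤ ∫⁻ x in K, (∫⁻ y in A, g x y ∂ν) * w x ∂μ := by
  calc (c * ν T) * s ≤ (∫⁻ x in K, ∫⁻ y in T, g x y ∂ν ∂μ) * s := by
        gcongr; exact mul_measure_le_lintegral_setLIntegral hg hT hc
    _ ≤ ∫⁻ x in K, (∫⁻ y in T, g x y ∂ν) * s ∂μ := lintegral_mul_const_le _ _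
    _ ≤ ∫⁻ x in K, (∫⁻ y in A, g x y ∂ν) * w x ∂μ :=
      lintegral_mono_ae <| (ae_restrict_iff' hK).2 <| ae_of_all _ fun x hx => by
        gcongr ?_ * ?_
        exacts [lintegral_mono' (Measure.restrict_mono hTA le_rfl) le_rfl, hw x hx]

lemma norm_rpow_add_norm_rpow_le {E₁ E₂ : Type*} [SeminormedAddCommGroup E₁]
    [SeminormedAddCommGroup E₂] {y : E₁ × E₂} {c L α₁ α₂ β₁ β₂ E : ℝ} (hc : 0 ≤ c) (hL : 0 ≤ L)
    (hα₁ : 0 ≤ α₁) (hα₂ : 0 ≤ α₂) (hE₁ : β₁ * α₁ = E) (hE₂ : β₂ * α₂ = E)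
    (h₁ : ‖y.1‖ ≤ c * L ^ β₁) (h₂ : ‖y.2‖ ≤ c * L ^ β₂) :
    ‖y.1‖ ^ α₁ + ‖y.2‖ ^ α₂ ≤ (c ^ α₁ + c ^ α₂) * L ^ E := by
  have hb₁ := rpow_le_mul_rpow_mul_of_le (norm_nonneg _) hc hL hα₁ h₁
  have hb₂ := rpow_le_mul_rpow_mul_of_le (norm_nonneg _) hc hL hα₂ h₂
  rw [hE₁] at hb₁
  rw [hE₂] at hb₂
  linarith

lemma ofReal_div_le_setLIntegral_of_mem_annulus {d₁ d₂ : ℕ}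
    {f : (Fin d₁ → ℝ) × (Fin d₂ → ℝ) → ℝ} {α₁ α₂ β₁ β₂ E f_u r₀ L : ℝ}
    (hα₁ : 0 ≤ α₁) (hα₂ : 0 ≤ α₂) (hE₁ : β₁ * α₁ = E) (hE₂ : β₂ * α₂ = E) (hfu : 0 ≤ f_u)
    (h_low : ∀ x : (Fin d₁ → ℝ) × (Fin d₂ → ℝ), r₀ ≤ max ‖x.1‖ ‖x.2‖ →
      ENNReal.ofReal (f_u / (‖x.1‖ ^ α₁ + ‖x.2‖ ^ α₂)) ≤
        ∫⁻ y in cubeP d₁ d₂ 0, ENNReal.ofReal (f (y - x)))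
    (hL : 0 ≤ L) (hr₀ : r₀ ≤ L ^ β₁) (hL₁ : 1/2 ≤ L ^ β₁) (hL₂ : 1/2 ≤ L ^ β₂)
    {y : (Fin d₁ → ℝ) × (Fin d₂ → ℝ)}
    (hy : y ∈ ⋃ j ∈ annulusIndices d₁ d₂ (L ^ β₁) (L ^ β₂), cubeP d₁ d₂ j) :
    ENNReal.ofReal (f_u / ((5 ^ α₁ + 5 ^ α₂) * L ^ E)) ≤
      ∫⁻ z in cubeP d₁ d₂ 0, ENNReal.ofReal (f (z - y)) := by
  obtain ⟨⟨h₁, -⟩, h₁', h₂'⟩ := norm_bounds_of_mem_annulus hL₁ hL₂ hy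
  refine (ENNReal.ofReal_le_ofReal ?_).trans (h_low y (le_max_of_le_left (by linarith)))
  have : 0 < ‖y.1‖ := by linarith
  gcongr
  exact norm_rpow_add_norm_rpow_le (by norm_num) hL hα₁ hα₂ hE₁ hE₂ h₁' h₂'

theorem statement11_general (d₁ d₂ : ℕ)
    (f : (Fin d₁ → ℝ) × (Fin d₂ → ℝ) → ℝ)
    (hf_meas : Measurable f)
    (α₁ α₂ : ℝ) (hα₁ : 0 < α₁) (hα₂ : 0 < α₂)
    (hγ : (d₁ : ℝ) / α₁ + (d₂ : ℝ) / α₂ < 1)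
    (f_u r₀ : ℝ) (hfu : 0 < f_u)
    (h_low : ∀ x : (Fin d₁ → ℝ) × (Fin d₂ → ℝ), r₀ ≤ max ‖x.1‖ ‖x.2‖ →
      ENNReal.ofReal (f_u / (‖x.1‖ ^ α₁ + ‖x.2‖ ^ α₂)) ≤
        ∫⁻ y in cubeP d₁ d₂ 0, ENNReal.ofReal (f (y - x)))
    (ψ : (Fin d₁ → ℝ) × (Fin d₂ → ℝ) → ℝ)
    (s : ℝ) (hs : 0 < s) (hψ_inf : ∀ x ∈ cubeP d₁ d₂ 0, s ≤ ψ x ^ 2)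
    (β₁ β₂ : ℝ)
    (hβ₁ : β₁ = 2 / (α₁ * (1 - ((d₁ : ℝ) / α₁ + (d₂ : ℝ) / α₂))))
    (hβ₂ : β₂ = 2 / (α₂ * (1 - ((d₁ : ℝ) / α₁ + (d₂ : ℝ) / α₂)))) :
    ∃ c₆ L₀ : ℝ, 0 < c₆ ∧ 1 < L₀ ∧
      ∀ L : ℝ, L₀ ≤ L →
      ∀ ν : Measure ((Fin d₁ → ℝ) × (Fin d₂ → ℝ)),
        (∀ j, ν (cubeP d₁ d₂ j) ≤ 1) →
        ENNReal.ofReal (c₆ *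
            L ^ (-(2 / (1 - ((d₁ : ℝ) / α₁ + (d₂ : ℝ) / α₂))))) *
          ν (⋃ j ∈ {j : (Fin d₁ → ℤ) × (Fin d₂ → ℤ) |
              (2 * L ^ β₁ < ‖j.1‖ ∧ ‖j.1‖ ≤ 4 * L ^ β₁) ∧
              (2 * L ^ β₂ < ‖j.2‖ ∧ ‖j.2‖ ≤ 4 * L ^ β₂)}, cubeP d₁ d₂ j) ≤
        ∫⁻ x in cubeP d₁ d₂ 0,
          (∫⁻ y in {y : (Fin d₁ → ℝ) × (Fin d₂ → ℝ) |
              L ^ β₁ < ‖y.1‖ ∧ L ^ β₂ < ‖y.2‖},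
              ENNReal.ofReal (f (x - y)) ∂ν) * ENNReal.ofReal (ψ x ^ 2) := by
  have hβ₁pos : 0 < β₁ := hβ₁ ▸ div_pos two_pos (mul_pos hα₁ (sub_pos.2 hγ))
  have hβ₂pos : 0 < β₂ := hβ₂ ▸ div_pos two_pos (mul_pos hα₂ (sub_pos.2 hγ))
  have hβ₁E : β₁ * α₁ = 2 / (1 - ((d₁ : ℝ) / α₁ + (d₂ : ℝ) / α₂)) := by rw [hβ₁]; field_simp
  have hβ₂E : β₂ * α₂ = 2 / (1 - ((d₁ : ℝ) / α₁ + (d₂ : ℝ) / α₂)) := by rw [hβ₂]; field_simp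
  set E := 2 / (1 - ((d₁ : ℝ) / α₁ + (d₂ : ℝ) / α₂))
  set C : ℝ := 5 ^ α₁ + 5 ^ α₂
  obtain ⟨L₀, hL₀⟩ := ((eventually_gt_atTop 1).and <|
    ((tendsto_rpow_atTop hβ₁pos).eventually_ge_atTop (max r₀ 1)).and
      ((tendsto_rpow_atTop hβ₂pos).eventually_ge_atTop 1)).exists_forall_of_atTop
  refine ⟨s * f_u / C, max L₀ 2, by positivity, lt_max_of_lt_right one_lt_two,
    fun L hL ν hν => ?_⟩
  obtain ⟨hL, hr₀L, hL₂⟩ := hL₀ L (le_of_max_le_left hL)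
  have hL₁ : 1 ≤ L ^ β₁ := le_of_max_le_right hr₀L
  have := sigmaFinite_of_measure_cubeP_lt_top fun j => (hν j).trans_lt one_lt_top
  calc ENNReal.ofReal (s * f_u / C * L ^ (-E)) * ν _
      = ENNReal.ofReal (f_u / (C * L ^ E)) * ν _ * ENNReal.ofReal s := by
        rw [mul_right_comm, ← ENNReal.ofReal_mul (by positivity), Real.rpow_neg (by linarith)]
        congr 2
        field_simp
    _ ≤ _ := mul_mul_measure_le_setLIntegral_mul (by fun_prop) (measurableSet_cubeP 0)
        (measurableSet_biUnion_annulus _ _)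
        (fun y hy => (norm_bounds_of_mem_annulus (by linarith) (by linarith) hy).1)
        (fun y hy => ofReal_div_le_setLIntegral_of_mem_annulus hα₁.le hα₂.le hβ₁E hβ₂E hfu.le
          h_low (by linarith) (le_of_max_le_left hr₀L) (by linarith) (by linarith) hy)
        fun x hx => ENNReal.ofReal_le_ofReal (hψ_inf x hx)

/-- with `β_k = 2/(α_k(1-γ))`, the annulus
`Λ̃ = ⋃ {Λ_j : 2L^{β₁} < |j₁| ≤ 4L^{β₁}, 2L^{β₂} < |j₂| ≤ 4L^{β₂}}` and
`V_{ν,L}(x) = ∫_{|y₁| > L^{β₁}, |y₂| > L^{β₂}} f(x-y) ν(dy)`, one has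
`∫_{Λ₀} V_{ν,L} ψ² ≥ c₆ L^{-2/(1-γ)} ν(Λ̃)` for all `L ≥ L₀` and all `ν` with
`ν(Λ_j) ≤ 1`. -/
theorem statement11 (d₁ d₂ : ℕ) (hd₁ : 0 < d₁) (hd₂ : 0 < d₂)
    (f : (Fin d₁ → ℝ) × (Fin d₂ → ℝ) → ℝ)
    (hf_meas : Measurable f) (hf_nonneg : ∀ x, 0 ≤ f x)
    (α₁ α₂ : ℝ) (hα₁ : 0 < α₁) (hα₂ : 0 < α₂)
    (hγ : (d₁ : ℝ) / α₁ + (d₂ : ℝ) / α₂ < 1)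
    (f_u f₀ r₀ : ℝ) (hfu : 0 < f_u) (hf₀ : 0 < f₀) (hr₀ : 0 < r₀)
    (h_low : ∀ x : (Fin d₁ → ℝ) × (Fin d₂ → ℝ), r₀ ≤ max ‖x.1‖ ‖x.2‖ →
      ENNReal.ofReal (f_u / (‖x.1‖ ^ α₁ + ‖x.2‖ ^ α₂)) ≤
        ∫⁻ y in cubeP d₁ d₂ 0, ENNReal.ofReal (f (y - x)))
    (h_upp : ∀ x : (Fin d₁ → ℝ) × (Fin d₂ → ℝ), r₀ ≤ max ‖x.1‖ ‖x.2‖ →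
      f x ≤ f₀ / (‖x.1‖ ^ α₁ + ‖x.2‖ ^ α₂))
    (ψ : (Fin d₁ → ℝ) × (Fin d₂ → ℝ) → ℝ) (hψ_meas : Measurable ψ)
    (hψ_pos : ∀ x, 0 < ψ x)
    (hψ_per : ∀ x j, ψ (x + latVecP d₁ d₂ j) = ψ x)
    (s : ℝ) (hs : 0 < s) (hψ_inf : ∀ x ∈ cubeP d₁ d₂ 0, s ≤ ψ x ^ 2)
    (β₁ β₂ : ℝ)
    (hβ₁ : β₁ = 2 / (α₁ * (1 - ((d₁ : ℝ) / α₁ + (d₂ : ℝ) / α₂))))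
    (hβ₂ : β₂ = 2 / (α₂ * (1 - ((d₁ : ℝ) / α₁ + (d₂ : ℝ) / α₂)))) :
    ∃ c₆ L₀ : ℝ, 0 < c₆ ∧ 1 < L₀ ∧
      ∀ L : ℝ, L₀ ≤ L →
      ∀ ν : Measure ((Fin d₁ → ℝ) × (Fin d₂ → ℝ)),
        (∀ j, ν (cubeP d₁ d₂ j) ≤ 1) →
        ENNReal.ofReal (c₆ *
            L ^ (-(2 / (1 - ((d₁ : ℝ) / α₁ + (d₂ : ℝ) / α₂))))) *
          ν (⋃ j ∈ {j : (Fin d₁ → ℤ) × (Fin d₂ → ℤ) |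
              (2 * L ^ β₁ < ‖j.1‖ ∧ ‖j.1‖ ≤ 4 * L ^ β₁) ∧
              (2 * L ^ β₂ < ‖j.2‖ ∧ ‖j.2‖ ≤ 4 * L ^ β₂)}, cubeP d₁ d₂ j) ≤
        ∫⁻ x in cubeP d₁ d₂ 0,
          (∫⁻ y in {y : (Fin d₁ → ℝ) × (Fin d₂ → ℝ) |
              L ^ β₁ < ‖y.1‖ ∧ L ^ β₂ < ‖y.2‖},
              ENNReal.ofReal (f (x - y)) ∂ν) * ENNReal.ofReal (ψ x ^ 2) :=
  statement11_general d₁ d₂ f hf_meas α₁ α₂ hα₁ hα₂ hγ f_u r₀ hfu h_low ψ s hs hψ_inf β₁ β₂ hβ₁ hβ₂
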